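/- arXiv:1501.04595 — 4 statements merged into one kernel-verified Lean document; each statement's English description precedes it below -/
import Mathlib

section
/- For every ν ≥ 0 and z > 0, the modified Bessel function of the first kind satisfies z^ν/(2^ν Γ(1+ν)) ≤ I_ν(z) ≤ (z^ν/(2^ν Γ(1+ν))) e^z. -/
set_option maxHeartbeats 1000000


/-- The modified Bessel function of the first kind of order `ν`,
`I_ν(z) = Σ_{k≥0} (z/2)^{ν+2k} / (k! Γ(ν+k+1))`. -/
noncomputable def besselI (ν z : ℝ) : ℝ :=
  ∑' k : ℕ, (z / 2) ^ (ν + 2 * (k : ℝ)) / ((Nat.factorial k : ℝ) * Real.Gamma (ν + k + 1))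

lemma two_mul_factorial_le (k : ℕ) : (2 * k).factorial ≤ 4 ^ k * k.factorial ^ 2 := by
  induction k with
  | zero => simp
  | succ n ih =>
    have h : 2 * (n + 1) = (2 * n + 1) + 1 := by ring
    rw [h, Nat.factorial_succ, Nat.factorial_succ, Nat.factorial_succ]
    calc (2 * n + 1 + 1) * ((2 * n + 1) * (2 * n).factorial)
        ≤ (2 * n + 2) * ((2 * n + 2) * (4 ^ n * n.factorial ^ 2)) := by
          apply Nat.mul_le_mul (by omega)
          exact Nat.mul_le_mul (by omega) ih
      _ = 4 ^ (n + 1) * ((n + 1) * n.factorial) ^ 2 := by ring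

lemma factorial_mul_Gamma_le (ν : ℝ) (hν : 0 ≤ ν) (k : ℕ) :
    (k.factorial : ℝ) * Real.Gamma (ν + 1) ≤ Real.Gamma (ν + k + 1) := by
  induction k with
  | zero => simp
  | succ n ih =>
    have hpos : (0 : ℝ) < ν + n + 1 := by positivity
    rw [Nat.factorial_succ]
    push_cast
    rw [show ν + ((n : ℝ) + 1) + 1 = (ν + n + 1) + 1 by ring, Real.Gamma_add_one hpos.ne']
    have hG : 0 ≤ Real.Gamma (ν + n + 1) := (Real.Gamma_pos_of_pos hpos).le
    calc ((n : ℝ) + 1) * n.factorial * Real.Gamma (ν + 1)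
        = ((n : ℝ) + 1) * ((n.factorial : ℝ) * Real.Gamma (ν + 1)) := by ring
      _ ≤ ((n : ℝ) + 1) * Real.Gamma (ν + n + 1) := by
          apply mul_le_mul_of_nonneg_left ih (by positivity)
      _ ≤ (ν + n + 1) * Real.Gamma (ν + n + 1) := by
          apply mul_le_mul_of_nonneg_right (by linarith) hG

/-- for every `ν ≥ 0` and `z > 0`,
`z^ν/(2^ν Γ(1+ν)) ≤ I_ν(z) ≤ (z^ν/(2^ν Γ(1+ν))) e^z`. -/
theorem besselI_bounds (ν z : ℝ) (hν : 0 ≤ ν) (hz : 0 < z) :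
    z ^ ν / (2 ^ ν * Real.Gamma (1 + ν)) ≤ besselI ν z ∧
      besselI ν z ≤ z ^ ν / (2 ^ ν * Real.Gamma (1 + ν)) * Real.exp z := by
  have hz2 : (0 : ℝ) < z / 2 := by linarith
  set a : ℕ → ℝ := fun k =>
    (z / 2) ^ (ν + 2 * (k : ℝ)) / ((k.factorial : ℝ) * Real.Gamma (ν + k + 1)) with ha
  set C : ℝ := (z / 2) ^ ν / Real.Gamma (ν + 1) with hC
  have hGpos : ∀ k : ℕ, (0 : ℝ) < Real.Gamma (ν + k + 1) := fun k =>
    Real.Gamma_pos_of_pos (by positivity)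
  have hG1 : (0 : ℝ) < Real.Gamma (ν + 1) := Real.Gamma_pos_of_pos (by positivity)
  have hCpos : 0 < C := div_pos (Real.rpow_pos_of_pos hz2 ν) hG1
  have hapos : ∀ k, 0 < a k := by
    intro k
    apply div_pos (Real.rpow_pos_of_pos hz2 _)
    exact mul_pos (by exact_mod_cast (Nat.factorial_pos k)) (hGpos k)
  have hak : ∀ k : ℕ, a k
      = (z / 2) ^ ν * ((z / 2) ^ (2 * k) / ((k.factorial : ℝ) * Real.Gamma (ν + k + 1))) := by
    intro k
    show (z / 2) ^ (ν + 2 * (k : ℝ)) / ((k.factorial : ℝ) * Real.Gamma (ν + k + 1)) = _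
    have : (z / 2) ^ (ν + 2 * (k : ℝ)) = (z / 2) ^ ν * (z / 2) ^ (2 * k : ℕ) := by
      rw [Real.rpow_add hz2, ← Real.rpow_natCast (z / 2) (2 * k)]
      push_cast
      ring_nf
    rw [this]
    ring
  -- the comparison with the exponential series
  have hbound : ∀ k : ℕ, a k ≤ C * (z ^ (2 * k) / ((2 * k).factorial : ℝ)) := by
    intro k
    rw [hak k, hC]
    have hfk : (0 : ℝ) < (k.factorial : ℝ) := by exact_mod_cast Nat.factorial_pos k
    have hfk2 : (0 : ℝ) < ((2 * k).factorial : ℝ) := by exact_mod_cast Nat.factorial_pos (2 * k)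
    have key : (z / 2) ^ (2 * k) / ((k.factorial : ℝ) * Real.Gamma (ν + k + 1))
        ≤ z ^ (2 * k) / (Real.Gamma (ν + 1) * ((2 * k).factorial : ℝ)) := by
      rw [div_le_div_iff₀ (by positivity) (by positivity)]
      have h1 : ((2 * k).factorial : ℝ) ≤ 4 ^ k * (k.factorial : ℝ) ^ 2 := by
        exact_mod_cast two_mul_factorial_le k
      have h2 := factorial_mul_Gamma_le ν hν k
      have hzk : (z / 2) ^ (2 * k) = z ^ (2 * k) / 4 ^ k := by
        rw [div_pow, pow_mul, pow_mul]; norm_num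
      rw [hzk]
      have h4 : (0 : ℝ) < 4 ^ k := by positivity
      have hzp : (0 : ℝ) < z ^ (2 * k) := by positivity
      calc z ^ (2 * k) / 4 ^ k * (Real.Gamma (ν + 1) * ((2 * k).factorial : ℝ))
          ≤ z ^ (2 * k) / 4 ^ k * (Real.Gamma (ν + 1) * (4 ^ k * (k.factorial : ℝ) ^ 2)) := by
            apply mul_le_mul_of_nonneg_left _ (by positivity)
            exact mul_le_mul_of_nonneg_left h1 hG1.le
        _ = z ^ (2 * k) * ((k.factorial : ℝ) * ((k.factorial : ℝ) * Real.Gamma (ν + 1))) := by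
            field_simp
        _ ≤ z ^ (2 * k) * ((k.factorial : ℝ) * Real.Gamma (ν + k + 1)) := by
            apply mul_le_mul_of_nonneg_left _ hzp.le
            exact mul_le_mul_of_nonneg_left h2 hfk.le
    calc (z / 2) ^ ν * ((z / 2) ^ (2 * k) / ((k.factorial : ℝ) * Real.Gamma (ν + k + 1)))
        ≤ (z / 2) ^ ν * (z ^ (2 * k) / (Real.Gamma (ν + 1) * ((2 * k).factorial : ℝ))) := by
          exact mul_le_mul_of_nonneg_left key (Real.rpow_pos_of_pos hz2 ν).le
      _ = (z / 2) ^ ν / Real.Gamma (ν + 1) * (z ^ (2 * k) / ((2 * k).factorial : ℝ)) := by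
          ring
  have hinj : Function.Injective (fun k : ℕ => 2 * k) := fun a b h => Nat.eq_of_mul_eq_mul_left two_pos h
  have hsub : Summable (fun k : ℕ => z ^ (2 * k) / ((2 * k).factorial : ℝ)) :=
    (Real.summable_pow_div_factorial z).comp_injective hinj
  have hsb : Summable (fun k : ℕ => C * (z ^ (2 * k) / ((2 * k).factorial : ℝ))) :=
    hsub.mul_left C
  have hsa : Summable a :=
    Summable.of_nonneg_of_le (fun k => (hapos k).le) hbound hsb
  have hbesselI : besselI ν z = ∑' k, a k := rfl
  -- first term value
  have ha0 : a 0 = C := by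
    simp [ha, hC]
  have hCval : z ^ ν / (2 ^ ν * Real.Gamma (1 + ν)) = C := by
    rw [hC, Real.div_rpow hz.le (by norm_num : (0:ℝ) ≤ 2), add_comm 1 ν]
    rw [div_div]
  clear_value a C
  constructor
  · rw [hbesselI, hCval, ← ha0]
    exact Summable.le_tsum hsa 0 fun i _ => (hapos i).le
  · rw [hbesselI, hCval]
    have s1 : (∑' k, a k) ≤ ∑' k : ℕ, C * (z ^ (2 * k) / ((2 * k).factorial : ℝ)) :=
      Summable.tsum_le_tsum hbound hsa hsb
    have s2 : (∑' k : ℕ, C * (z ^ (2 * k) / ((2 * k).factorial : ℝ)))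
        = C * ∑' k : ℕ, z ^ (2 * k) / ((2 * k).factorial : ℝ) := tsum_mul_left
    have s3 : (∑' k : ℕ, z ^ (2 * k) / ((2 * k).factorial : ℝ)) ≤ Real.exp z := by
      have hexp : Real.exp z = ∑' n : ℕ, z ^ n / (n.factorial : ℝ) := by
        rw [Real.exp_eq_exp_ℝ, NormedSpace.exp_eq_tsum_div]
      rw [hexp]
      exact Summable.tsum_le_tsum_of_inj (fun k => 2 * k) hinj
        (fun c _ => by positivity) (fun i => le_rfl) hsub
        (Real.summable_pow_div_factorial z)
    calc (∑' k, a k) ≤ _ := s1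
      _ = _ := s2
      _ ≤ C * Real.exp z := mul_le_mul_of_nonneg_left s3 hCpos.le
end

section
/- The function u ↦ ∫_u^∞ t^{-3/2} e^{-μ² t/2}/√(2π) dt is integrable on (0,1) for any μ > 0. -/
open MeasureTheory Set

private lemma integrand_integrable (μ : ℝ) {u : ℝ} (hu : 0 < u) :
    IntegrableOn
      (fun t : ℝ => t ^ (-(3 : ℝ) / 2) * Real.exp (-μ ^ 2 * t / 2) / Real.sqrt (2 * Real.pi))
      (Ioi u) := by
  have h1 : IntegrableOn (fun t : ℝ => t ^ (-(3 : ℝ) / 2)) (Ioi u) :=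
    integrableOn_Ioi_rpow_of_lt (by norm_num) hu
  have h2 : IntegrableOn (fun t : ℝ => t ^ (-(3 : ℝ) / 2) / Real.sqrt (2 * Real.pi)) (Ioi u) :=
    h1.div_const _
  refine h2.mono' ?_ ?_
  · apply ContinuousOn.aestronglyMeasurable ?_ measurableSet_Ioi
    apply ContinuousOn.div_const
    apply ContinuousOn.mul
    · exact fun t ht => (Real.continuousAt_rpow_const t _ (Or.inl (ne_of_gt (hu.trans ht)))).continuousWithinAt
    · exact (Real.continuous_exp.comp (by continuity)).continuousOn
  · filter_upwards [ae_restrict_mem measurableSet_Ioi] with t ht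
    have ht0 : 0 < t := hu.trans ht
    have hexp : Real.exp (-μ ^ 2 * t / 2) ≤ 1 := by
      rw [Real.exp_le_one_iff]
      have : 0 ≤ μ ^ 2 * t := mul_nonneg (sq_nonneg μ) ht0.le
      nlinarith
    have hrp : (0:ℝ) ≤ t ^ (-(3 : ℝ) / 2) := Real.rpow_nonneg ht0.le _
    have hs : (0:ℝ) ≤ Real.sqrt (2 * Real.pi) := Real.sqrt_nonneg _
    rw [Real.norm_eq_abs, abs_of_nonneg (by positivity)]
    rw [div_le_div_iff_of_pos_right (by positivity)]
    exact mul_le_of_le_one_right hrp hexp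

/-- the function `u ↦ ∫_u^∞ t^{-3/2} e^{-μ² t/2}/√(2π) dt` is
integrable on `(0,1)` for any `μ > 0`. -/
theorem tail_integral_integrable (μ : ℝ) (hμ : 0 < μ) :
    IntegrableOn
      (fun u : ℝ =>
        ∫ t in Ioi u, t ^ (-(3 : ℝ) / 2) * Real.exp (-μ ^ 2 * t / 2) / Real.sqrt (2 * Real.pi))
      (Ioo (0 : ℝ) 1) := by
  set F : ℝ → ℝ := fun u =>
    ∫ t in Ioi u, t ^ (-(3 : ℝ) / 2) * Real.exp (-μ ^ 2 * t / 2) / Real.sqrt (2 * Real.pi)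
    with hF
  have hnonneg : ∀ u, 0 < u → 0 ≤ F u := by
    intro u hu
    apply setIntegral_nonneg measurableSet_Ioi
    intro t ht
    have ht0 : 0 < t := hu.trans ht
    positivity
  have hanti : AntitoneOn F (Ioo (0:ℝ) 1) := by
    intro u hu v hv huv
    apply setIntegral_mono_set (integrand_integrable μ hu.1)
    · filter_upwards [ae_restrict_mem measurableSet_Ioi] with t ht
      have ht0 : 0 < t := hu.1.trans ht
      positivity
    · exact HasSubset.Subset.eventuallyLE (Ioi_subset_Ioi huv)
  have hbound : ∀ u, 0 < u → F u ≤ 2 * u ^ (-(1:ℝ)/2) / Real.sqrt (2 * Real.pi) := by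
    intro u hu
    have h1 : IntegrableOn (fun t : ℝ => t ^ (-(3 : ℝ) / 2) / Real.sqrt (2 * Real.pi)) (Ioi u) :=
      (integrableOn_Ioi_rpow_of_lt (by norm_num) hu).div_const _
    have step : F u ≤ ∫ t in Ioi u, t ^ (-(3 : ℝ) / 2) / Real.sqrt (2 * Real.pi) := by
      apply setIntegral_mono_on (integrand_integrable μ hu) h1 measurableSet_Ioi
      intro t ht
      have ht0 : 0 < t := hu.trans ht
      have hexp : Real.exp (-μ ^ 2 * t / 2) ≤ 1 := by
        rw [Real.exp_le_one_iff]
        nlinarith [mul_nonneg (sq_nonneg μ) ht0.le]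
      rw [div_le_div_iff_of_pos_right (by positivity)]
      exact mul_le_of_le_one_right (Real.rpow_nonneg ht0.le _) hexp
    refine step.trans ?_
    rw [integral_div, integral_Ioi_rpow_of_lt (by norm_num) hu]
    rw [div_le_div_iff_of_pos_right (by positivity)]
    rw [show (-(3:ℝ)/2 + 1) = -(1:ℝ)/2 by norm_num]
    ring_nf
    norm_num
  have hg : IntegrableOn (fun u : ℝ => 2 * u ^ (-(1:ℝ)/2) / Real.sqrt (2 * Real.pi))
      (Ioo (0:ℝ) 1) := by
    have h0 : IntervalIntegrable (fun u : ℝ => u ^ (-(1:ℝ)/2)) volume 0 1 :=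
      intervalIntegral.intervalIntegrable_rpow' (by norm_num)
    rw [intervalIntegrable_iff_integrableOn_Ioo_of_le (by norm_num)] at h0
    exact (h0.const_mul 2).div_const _
  refine hg.mono' ?_ ?_
  · exact ((aemeasurable_restrict_of_antitoneOn measurableSet_Ioo hanti).aestronglyMeasurable)
  · filter_upwards [ae_restrict_mem measurableSet_Ioo] with u hu
    rw [Real.norm_eq_abs, abs_of_nonneg (hnonneg u hu.1)]
    exact hbound u hu.1
end

section
/- Let p^V(t,x,y) be the Dirichlet heat kernel of a cone V with vertex 0, given for x = rθ, y = ρω by p^V(t,x,y) = t^{-1}(rρ)^{-(n/2-1)} e^{-(r²+ρ²)/(2t)} Σ_{i≥1} I_{α^i}(rρ/t) m^i(θ) m^i(ω), where 0 < α¹ < α² ≤ ⋯ and (m^i) is an orthonormal basis of eigenfunctions. Then for fixed x, y in V, t^{1+α¹} p^V(t,x,y) → v(x)v(y)/(2^{α¹} Γ(1+α¹)) as t → ∞, where v(rθ) = r^{α¹-(n/2-1)} m¹(θ). -/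
/-!
As `t → ∞` the Bessel arguments `rρ/t` tend to `0`, where
`(z/2)^ν / Γ(ν+1) ≤ I_ν(z) ≤ (z/2)^ν / Γ(ν+1) · e^{z²/4}`. After multiplication by `t^{α¹}`
the `i`-th term of the eigenfunction series therefore behaves like
`t^{α¹-αⁱ} (rρ/2)^{αⁱ} / Γ(αⁱ+1) mⁱ(θ) mⁱ(ω)`, which tends to `0` for `i ≥ 2` by the spectral
gap `α¹ < α²` and to the claimed limit for `i = 1`. For `t ≥ 1` the same bound dominates the
terms uniformly by a summable sequence, so Tannery's theorem passes the limit through the sum.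
-/

open Filter

/-- The Dirichlet heat kernel of a cone with vertex `0` and opening `D`, in polar
coordinates `x = rθ`, `y = ρω`:
`p^V(t,x,y) = t^{-1}(rρ)^{-(n/2-1)} e^{-(r²+ρ²)/(2t)} Σ_i I_{α_i}(rρ/t) mᵢ(θ)mᵢ(ω)`. -/
noncomputable def conePV (n : ℕ) {D : Type*} (α : ℕ → ℝ) (m : ℕ → D → ℝ)
    (t r ρ : ℝ) (θ ω : D) : ℝ :=
  (1 / t) * (r * ρ) ^ (-((n : ℝ) / 2 - 1)) * Real.exp (-(r ^ 2 + ρ ^ 2) / (2 * t)) *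
    ∑' i : ℕ, besselI (α i) (r * ρ / t) * m i θ * m i ω

open Topology Real

lemma Real.hasSum_pow_div_factorial (x : ℝ) :
    HasSum (fun k : ℕ => x ^ k / (k.factorial : ℝ)) (exp x) := by
  rw [exp_eq_exp_ℝ]
  exact NormedSpace.expSeries_div_hasSum_exp x

lemma Real.Gamma_add_one_le_Gamma_add_nat_add_one {ν : ℝ} (hν : 0 ≤ ν) (k : ℕ) :
    Gamma (ν + 1) ≤ Gamma (ν + k + 1) := by
  induction k with
  | zero => simp
  | succ k ih =>
    have hΓ : 0 < Gamma (ν + k + 1) := Gamma_pos_of_pos (by positivity)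
    calc Gamma (ν + 1) ≤ Gamma (ν + k + 1) := ih
      _ ≤ (ν + k + 1) * Gamma (ν + k + 1) :=
        le_mul_of_one_le_left hΓ.le (by linarith [k.cast_nonneg (α := ℝ)])
      _ = Gamma (ν + (k + 1 : ℕ) + 1) := by
        rw [Nat.cast_succ, ← add_assoc, Gamma_add_one (s := ν + k + 1) (by positivity)]

noncomputable def besselILead (ν z : ℝ) : ℝ :=
  (z / 2) ^ ν / Gamma (ν + 1)

section besselI

variable {ν z : ℝ}

lemma besselILead_nonneg (hν : 0 ≤ ν) (hz : 0 ≤ z) : 0 ≤ besselILead ν z :=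
  div_nonneg (by positivity) (Gamma_pos_of_pos (by positivity)).le

lemma besselI_term_nonneg (hν : 0 ≤ ν) (hz : 0 ≤ z) (k : ℕ) :
    0 ≤ (z / 2) ^ (ν + 2 * (k : ℝ)) / ((k.factorial : ℝ) * Gamma (ν + k + 1)) := by
  have := Gamma_pos_of_pos (show 0 < ν + k + 1 by positivity)
  positivity

lemma besselI_term_le (hν : 0 ≤ ν) (hz : 0 < z) (k : ℕ) :
    (z / 2) ^ (ν + 2 * (k : ℝ)) / ((k.factorial : ℝ) * Gamma (ν + k + 1)) ≤
      besselILead ν z * (((z / 2) ^ 2) ^ k / k.factorial) := by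
  have hsplit : (z / 2) ^ (ν + 2 * (k : ℝ)) = (z / 2) ^ ν * ((z / 2) ^ 2) ^ k := by
    rw [rpow_add (by positivity), show 2 * (k : ℝ) = ((2 * k : ℕ) : ℝ) by push_cast; ring,
      rpow_natCast, pow_mul]
  rw [hsplit, besselILead]
  calc (z / 2) ^ ν * ((z / 2) ^ 2) ^ k / ((k.factorial : ℝ) * Gamma (ν + k + 1))
      ≤ (z / 2) ^ ν * ((z / 2) ^ 2) ^ k / ((k.factorial : ℝ) * Gamma (ν + 1)) := by
        gcongr
        exact Gamma_add_one_le_Gamma_add_nat_add_one hν k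
    _ = (z / 2) ^ ν / Gamma (ν + 1) * (((z / 2) ^ 2) ^ k / k.factorial) := by ring

lemma summable_besselI_term (hν : 0 ≤ ν) (hz : 0 < z) :
    Summable fun k : ℕ =>
      (z / 2) ^ (ν + 2 * (k : ℝ)) / ((k.factorial : ℝ) * Gamma (ν + k + 1)) :=
  .of_nonneg_of_le (besselI_term_nonneg hν hz.le) (besselI_term_le hν hz)
    ((summable_pow_div_factorial _).mul_left _)

lemma besselI_nonneg (hν : 0 ≤ ν) (hz : 0 ≤ z) : 0 ≤ besselI ν z :=
  tsum_nonneg (besselI_term_nonneg hν hz)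

lemma besselILead_le_besselI (hν : 0 ≤ ν) (hz : 0 < z) : besselILead ν z ≤ besselI ν z := by
  simpa [besselILead, besselI] using (summable_besselI_term hν hz).le_tsum 0
    fun k _ => besselI_term_nonneg hν hz.le k

lemma besselI_le_besselILead_mul_exp (hν : 0 ≤ ν) (hz : 0 < z) :
    besselI ν z ≤ besselILead ν z * exp ((z / 2) ^ 2) :=
  hasSum_le (besselI_term_le hν hz) (summable_besselI_term hν hz).hasSum
    ((hasSum_pow_div_factorial _).mul_left _)

end besselI

section timeScaling

variable {μ ν a t : ℝ}

lemma rpow_mul_besselILead_div (ha : 0 ≤ a) (ht : 0 < t) :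
    t ^ μ * besselILead ν (a / t) = t ^ (μ - ν) * besselILead ν a := by
  rw [besselILead, besselILead, div_right_comm, div_rpow (by positivity) ht.le, rpow_sub ht]
  field_simp

lemma rpow_mul_besselILead_le_rpow_mul_besselI (hν : 0 ≤ ν) (ha : 0 < a) (ht : 0 < t) :
    t ^ (μ - ν) * besselILead ν a ≤ t ^ μ * besselI ν (a / t) := by
  rw [← rpow_mul_besselILead_div ha.le ht]
  gcongr
  exact besselILead_le_besselI hν (by positivity)

lemma rpow_mul_besselI_div_le (hν : 0 ≤ ν) (ha : 0 < a) (ht : 0 < t) :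
    t ^ μ * besselI ν (a / t) ≤ t ^ (μ - ν) * besselILead ν a * exp ((a / t / 2) ^ 2) := by
  calc t ^ μ * besselI ν (a / t)
      ≤ t ^ μ * (besselILead ν (a / t) * exp ((a / t / 2) ^ 2)) := by
        gcongr
        exact besselI_le_besselILead_mul_exp hν (by positivity)
    _ = t ^ (μ - ν) * besselILead ν a * exp ((a / t / 2) ^ 2) := by
        rw [← mul_assoc, rpow_mul_besselILead_div ha.le ht]

lemma rpow_mul_besselI_div_le_of_one_le (hν : 0 ≤ ν) (hμν : μ ≤ ν) (ha : 0 < a) (ht : 1 ≤ t) :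
    t ^ μ * besselI ν (a / t) ≤ besselILead ν a * exp ((a / 2) ^ 2) := by
  have := besselILead_nonneg hν ha.le
  calc t ^ μ * besselI ν (a / t)
      ≤ t ^ (μ - ν) * besselILead ν a * exp ((a / t / 2) ^ 2) :=
        rpow_mul_besselI_div_le hν ha (by linarith)
    _ ≤ 1 * besselILead ν a * exp ((a / 2) ^ 2) := by
        gcongr
        · exact rpow_le_one_of_one_le_of_nonpos ht (by linarith)
        · exact div_le_self ha.le ht
    _ = besselILead ν a * exp ((a / 2) ^ 2) := by rw [one_mul]

lemma tendsto_rpow_mul_besselI_div (hν : 0 ≤ ν) (ha : 0 < a) {L : ℝ}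
    (hL : Tendsto (fun t : ℝ => t ^ (μ - ν)) atTop (𝓝 L)) :
    Tendsto (fun t : ℝ => t ^ μ * besselI ν (a / t)) atTop (𝓝 (L * besselILead ν a)) := by
  have hexp : Tendsto (fun t : ℝ => exp ((a / t / 2) ^ 2)) atTop (𝓝 1) := by
    simpa using (((tendsto_const_nhds.div_atTop tendsto_id).div_const 2).pow 2).rexp
  have hlower := hL.mul_const (besselILead ν a)
  have hupper := hlower.mul hexp
  rw [mul_one] at hupper
  refine tendsto_of_tendsto_of_tendsto_of_le_of_le' hlower hupper ?_ ?_ <;>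
    filter_upwards [eventually_gt_atTop 0] with t ht
  exacts [rpow_mul_besselILead_le_rpow_mul_besselI hν ha ht, rpow_mul_besselI_div_le hν ha ht]

end timeScaling

theorem tendsto_rpow_mul_tsum_besselI_mul {α b : ℕ → ℝ} {a B : ℝ} (ha : 0 < a)
    (hα0 : 0 ≤ α 0) (hgap : ∀ i ≠ 0, α 0 < α i) (hb : ∀ i, |b i| ≤ B)
    (hsum : Summable fun i => besselILead (α i) a) :
    Tendsto (fun t : ℝ => t ^ α 0 * ∑' i, besselI (α i) (a / t) * b i) atTop
      (𝓝 (besselILead (α 0) a * b 0)) := by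
  have hαle (i : ℕ) : α 0 ≤ α i := by
    rcases eq_or_ne i 0 with rfl | hi
    exacts [le_rfl, (hgap i hi).le]
  have hαnn (i : ℕ) : 0 ≤ α i := hα0.trans (hαle i)
  have hterm (i : ℕ) : Tendsto (fun t : ℝ => t ^ α 0 * besselI (α i) (a / t) * b i) atTop
      (𝓝 (if i = 0 then besselILead (α 0) a * b 0 else 0)) := by
    rcases eq_or_ne i 0 with rfl | hi
    · have hL : Tendsto (fun t : ℝ => t ^ (α 0 - α 0)) atTop (𝓝 1) := by simp
      simpa using (tendsto_rpow_mul_besselI_div hα0 ha hL).mul_const (b 0)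
    · have hL : Tendsto (fun t : ℝ => t ^ (α 0 - α i)) atTop (𝓝 0) := by
        simpa using tendsto_rpow_neg_atTop (sub_pos.2 (hgap i hi))
      simpa [hi] using (tendsto_rpow_mul_besselI_div (hαnn i) ha hL).mul_const (b i)
  have hbound : ∀ᶠ t : ℝ in atTop, ∀ i,
      ‖t ^ α 0 * besselI (α i) (a / t) * b i‖ ≤ besselILead (α i) a * exp ((a / 2) ^ 2) * B := by
    filter_upwards [eventually_ge_atTop 1] with t ht i
    have hI := besselI_nonneg (hαnn i) (div_pos ha (by linarith : (0 : ℝ) < t)).le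
    have hlead := besselILead_nonneg (hαnn i) ha.le
    rw [norm_mul, norm_of_nonneg (by positivity), norm_eq_abs]
    exact mul_le_mul (rpow_mul_besselI_div_le_of_one_le (hαnn i) (hαle i) ha ht) (hb i)
      (abs_nonneg _) (by positivity)
  have hlim := tendsto_tsum_of_dominated_convergence ((hsum.mul_right _).mul_right _) hterm hbound
  simpa only [tsum_ite_eq, mul_assoc, tsum_mul_left] using hlim

lemma rpow_one_add_mul_conePV (n : ℕ) {D : Type*} (α : ℕ → ℝ) (m : ℕ → D → ℝ) {μ t : ℝ}
    (ht : 0 < t) (r ρ : ℝ) (θ ω : D) :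
    t ^ (1 + μ) * conePV n α m t r ρ θ ω =
      (r * ρ) ^ (-((n : ℝ) / 2 - 1)) * exp (-(r ^ 2 + ρ ^ 2) / (2 * t)) *
        (t ^ μ * ∑' i, besselI (α i) (r * ρ / t) * (m i θ * m i ω)) := by
  simp only [conePV, ← mul_assoc]
  rw [rpow_add ht, rpow_one]
  field_simp

/-- Eigenvalues `0 < λ¹ < λ² ≤ ⋯` are indexed here from `0`, so `α 0` plays the role of `α¹`. -/
theorem cone_heat_kernel_time_asymptotics_general {D : Type*} (n : ℕ)
    (lam : ℕ → ℝ) (m : ℕ → D → ℝ) (α : ℕ → ℝ)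
    (hα : ∀ i, α i = Real.sqrt (lam i + ((n : ℝ) / 2 - 1) ^ 2))
    (hlam0 : 0 < lam 0) (hlam01 : lam 0 < lam 1) (hlammono : Monotone lam)
    (hmbdd : ∃ Cm : ℝ, ∀ i θ, |m i θ| ≤ Cm)
    (hsum : ∀ r ρ : ℝ, 0 < r → 0 < ρ →
      Summable (fun i : ℕ =>
        (r * ρ) ^ (α i - ((n : ℝ) / 2 - 1)) / (2 ^ (α i) * Real.Gamma (1 + α i))))
    (r ρ : ℝ) (θ ω : D) (hr : 0 < r) (hρ : 0 < ρ) :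
    Tendsto (fun t : ℝ => t ^ (1 + α 0) * conePV n α m t r ρ θ ω) atTop
      (nhds ((r ^ (α 0 - ((n : ℝ) / 2 - 1)) * m 0 θ) *
        (ρ ^ (α 0 - ((n : ℝ) / 2 - 1)) * m 0 ω) / (2 ^ (α 0) * Real.Gamma (1 + α 0)))) := by
  set c : ℝ := (n : ℝ) / 2 - 1
  obtain ⟨Cm, hCm⟩ := hmbdd
  have hrρ : 0 < r * ρ := mul_pos hr hρ
  have hgap (i : ℕ) (hi : i ≠ 0) : α 0 < α i := by
    rw [hα, hα]
    exact sqrt_lt_sqrt (by positivity)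
      (by linarith [hlammono (Nat.one_le_iff_ne_zero.2 hi)])
  have hlead (ν : ℝ) : besselILead ν (r * ρ) =
      (r * ρ) ^ c * ((r * ρ) ^ (ν - c) / (2 ^ ν * Gamma (1 + ν))) := by
    rw [besselILead, div_rpow hrρ.le zero_le_two, ← mul_div_assoc, ← rpow_add hrρ, add_comm 1,
      add_sub_cancel, div_div]
  have hseries := tendsto_rpow_mul_tsum_besselI_mul hrρ (hα 0 ▸ sqrt_nonneg _) hgap
    (fun i => (abs_mul _ _).trans_le (mul_le_mul (hCm i θ) (hCm i ω) (abs_nonneg _)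
      ((abs_nonneg _).trans (hCm 0 θ))))
    (((hsum r ρ hr hρ).mul_left _).congr fun i => (hlead (α i)).symm)
  have hgauss : Tendsto (fun t : ℝ => exp (-(r ^ 2 + ρ ^ 2) / (2 * t))) atTop (𝓝 1) := by
    simpa using (tendsto_const_nhds.div_atTop (tendsto_id.const_mul_atTop two_pos)).rexp
  have hlim := (tendsto_const_nhds (x := (r * ρ) ^ (-c))).mul hgauss |>.mul hseries
  convert hlim.congr' ((eventually_gt_atTop 0).mono fun t ht =>
    (rpow_one_add_mul_conePV n α m ht r ρ θ ω).symm) using 2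
  rw [hlead, mul_one, ← mul_assoc ((r * ρ) ^ (-c)), ← mul_assoc ((r * ρ) ^ (-c)), ← rpow_add hrρ,
    neg_add_cancel, rpow_zero, one_mul, mul_rpow hr.le hρ.le]
  ring

/-- for fixed `x = rθ`, `y = ρω` in the cone,
`t^{1+α¹} p^V(t,x,y) → v(x)v(y)/(2^{α¹} Γ(1+α¹))` as `t → ∞`, where
`v(rθ) = r^{α¹-(n/2-1)} m¹(θ)`.  (Eigenvalues `0 < λ¹ < λ² ≤ ⋯` are indexed
here from `0`, so `α 0` plays the role of `α¹`.) -/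
theorem cone_heat_kernel_time_asymptotics {D : Type*} (n : ℕ) (hn : 1 ≤ n)
    (lam : ℕ → ℝ) (m : ℕ → D → ℝ) (α : ℕ → ℝ)
    (hα : ∀ i, α i = Real.sqrt (lam i + ((n : ℝ) / 2 - 1) ^ 2))
    (hlam0 : 0 < lam 0) (hlam01 : lam 0 < lam 1) (hlammono : Monotone lam)
    (hmbdd : ∃ Cm : ℝ, ∀ i θ, |m i θ| ≤ Cm)
    (hsum : ∀ r ρ : ℝ, 0 < r → 0 < ρ →
      Summable (fun i : ℕ =>
        (r * ρ) ^ (α i - ((n : ℝ) / 2 - 1)) / (2 ^ (α i) * Real.Gamma (1 + α i))))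
    (r ρ : ℝ) (θ ω : D) (hr : 0 < r) (hρ : 0 < ρ)
    (hser : ∀ t : ℝ, 0 < t →
      Summable (fun i : ℕ => besselI (α i) (r * ρ / t) * m i θ * m i ω)) :
    Tendsto (fun t : ℝ => t ^ (1 + α 0) * conePV n α m t r ρ θ ω) atTop
      (nhds ((r ^ (α 0 - ((n : ℝ) / 2 - 1)) * m 0 θ) *
        (ρ ^ (α 0 - ((n : ℝ) / 2 - 1)) * m 0 ω) / (2 ^ (α 0) * Real.Gamma (1 + α 0)))) :=
  cone_heat_kernel_time_asymptotics_general n lam m α hα hlam0 hlam01 hlammono hmbdd hsum r ρ θ ω hr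
    hρ
end

section
/- Let a : (0,∞) → (0,∞) satisfy a(t+s)/a(t) → 1 as t → ∞ for every s ∈ ℝ, and let p(t,x,y) be a symmetric kernel with p(t+s,x,y)/p(t,x,y) → 1 as t → ∞, satisfying the Chapman–Kolmogorov equation p(t+s,x,y) = ∫ p(t,x,z)p(s,z,y)dz on a domain O. If a(t)p(t,x,y) ≤ C_x^{1+|y|} for large t and h is any locally uniform limit point of a(t_k)p(t_k,·,·) along t_k → ∞, then h(x,y) = ∫_O h(x,z) p(s,z,y) dz for every s > 0. -/
/-!
By the ratio hypothesis, `a(t_k) p(t_k + s, x, y) → h(x, y)`; by Chapman–Kolmogorov the same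
quantity is `∫_O a(t_k) p(t_k, x, z) p(s, z, y) dz`. The growth bound `C^(1 + |z|)` on the first
factor is absorbed by the Gaussian bound on `p(s, z, y)`, so dominated convergence passes to the
limit under the integral.
-/

open Filter MeasureTheory Topology

section Gaussian

variable {V : Type*} [NormedAddCommGroup V] [InnerProductSpace ℝ V] [FiniteDimensional ℝ V]
  [MeasurableSpace V] [BorelSpace V]

theorem integrable_exp_neg_mul_sq_norm {b : ℝ} (hb : 0 < b) :
    Integrable (fun v : V => Real.exp (-b * ‖v‖ ^ 2)) := by
  have h := (GaussianFourier.integrable_cexp_neg_mul_sq_norm_add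
    (V := V) (b := (b : ℂ)) (by simpa using hb) 0 0).norm
  convert h using 2 with v
  simp [Complex.norm_exp, ← Complex.ofReal_pow]

-- Dominated via `L‖z‖ - b‖z - y‖² ≤ |L|‖y‖ + L²/(2b) - (b/2)‖z - y‖²`.
theorem integrable_exp_mul_norm_mul_exp_neg_mul_sq_norm_sub (L : ℝ) {b : ℝ} (hb : 0 < b) (y : V) :
    Integrable (fun z : V => Real.exp (L * ‖z‖) * Real.exp (-b * ‖z - y‖ ^ 2)) := by
  have hdom := ((integrable_exp_neg_mul_sq_norm (V := V) (half_pos hb)).comp_sub_right y).const_mul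
    (Real.exp (|L| * ‖y‖ + L ^ 2 / (2 * b)))
  refine hdom.mono' (by fun_prop) (ae_of_all _ fun z => ?_)
  rw [Real.norm_of_nonneg (by positivity), ← Real.exp_add, ← Real.exp_add, Real.exp_le_exp]
  have hlin : L * ‖z‖ ≤ |L| * ‖z - y‖ + |L| * ‖y‖ := by
    calc L * ‖z‖ ≤ |L| * ‖z‖ := mul_le_mul_of_nonneg_right (le_abs_self L) (norm_nonneg z)
      _ ≤ |L| * (‖z - y‖ + ‖y‖) := by gcongr; exact norm_le_norm_sub_add z y
      _ = |L| * ‖z - y‖ + |L| * ‖y‖ := by ring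
  have hquad : |L| * ‖z - y‖ ≤ L ^ 2 / (2 * b) + b / 2 * ‖z - y‖ ^ 2 := by
    rw [div_add' _ _ _ (by positivity), le_div_iff₀ (by positivity)]
    nlinarith [sq_nonneg (b * ‖z - y‖ - |L|), sq_abs L]
  linarith

theorem integrable_rpow_one_add_norm_mul_of_le_gaussian {C b G : ℝ} (hC : 0 < C) (hb : 0 < b)
    (y : V) {q : V → ℝ} (hq_meas : AEStronglyMeasurable q) (hq_nonneg : ∀ z, 0 ≤ q z)
    (hq_le : ∀ z, q z ≤ G * Real.exp (-b * ‖z - y‖ ^ 2)) :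
    Integrable (fun z => C ^ (1 + ‖z‖) * q z) := by
  have hdom :=
    (integrable_exp_mul_norm_mul_exp_neg_mul_sq_norm_sub (Real.log C) hb y).const_mul (C * G)
  have hmeas : AEStronglyMeasurable (fun z : V => C ^ (1 + ‖z‖)) :=
    (measurable_const.pow (measurable_const.add measurable_norm)).aestronglyMeasurable
  refine hdom.mono' (hmeas.mul hq_meas) (ae_of_all _ fun z => ?_)
  have hCz : 0 ≤ C ^ (1 + ‖z‖) := Real.rpow_nonneg hC.le _
  rw [Real.norm_of_nonneg (mul_nonneg hCz (hq_nonneg z))]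
  calc C ^ (1 + ‖z‖) * q z ≤ C ^ (1 + ‖z‖) * (G * Real.exp (-b * ‖z - y‖ ^ 2)) := by
        gcongr; exact hq_le z
    _ = C * G * (Real.exp (Real.log C * ‖z‖) * Real.exp (-b * ‖z - y‖ ^ 2)) := by
        rw [Real.rpow_add hC, Real.rpow_one, Real.rpow_def_of_pos hC]; ring

end Gaussian

theorem tendsto_mul_of_tendsto_div_one {ι : Type*} {l : Filter ι} {c v w : ι → ℝ} {A : ℝ}
    (hcw : Tendsto (fun k => c k * w k) l (𝓝 A)) (hvw : Tendsto (fun k => v k / w k) l (𝓝 1)) :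
    Tendsto (fun k => c k * v k) l (𝓝 A) := by
  have hw : ∀ᶠ k in l, w k ≠ 0 := by
    filter_upwards [hvw.eventually_ne one_ne_zero] with k hk hw
    simp [hw] at hk
  refine (by simpa using hcw.mul hvw : Tendsto (fun k => c k * w k * (v k / w k)) l (𝓝 A)).congr' ?_
  filter_upwards [hw] with k hk
  field_simp

theorem tendsto_integral_mul_of_dominated {α ι : Type*} [MeasurableSpace α] {μ : Measure α}
    {l : Filter ι} [l.IsCountablyGenerated] {F : ι → α → ℝ} {f g q : α → ℝ}
    (hF_meas : ∀ᶠ k in l, AEStronglyMeasurable (F k) μ) (hq_meas : AEStronglyMeasurable q μ)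
    (hF_le : ∀ᶠ k in l, ∀ᵐ z ∂μ, ‖F k z‖ ≤ g z) (hq_nonneg : ∀ᵐ z ∂μ, 0 ≤ q z)
    (hgq : Integrable (fun z => g z * q z) μ)
    (hF_lim : ∀ᵐ z ∂μ, Tendsto (fun k => F k z) l (𝓝 (f z))) :
    Tendsto (fun k => ∫ z, F k z * q z ∂μ) l (𝓝 (∫ z, f z * q z ∂μ)) := by
  refine tendsto_integral_filter_of_dominated_convergence _
    (by filter_upwards [hF_meas] with k hk using hk.mul hq_meas) ?_ hgq
    (by filter_upwards [hF_lim] with z hz using hz.mul_const (q z))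
  filter_upwards [hF_le] with k hk
  filter_upwards [hk, hq_nonneg] with z hFz hqz
  rw [norm_mul, Real.norm_of_nonneg hqz]
  exact mul_le_mul_of_nonneg_right hFz hqz

theorem limit_point_invariance_general (n : ℕ) (O : Set (EuclideanSpace ℝ (Fin n))) (hO : IsOpen O)
    (a : ℝ → ℝ) (hapos : ∀ t : ℝ, 0 < t → 0 < a t)
    (p : ℝ → EuclideanSpace ℝ (Fin n) → EuclideanSpace ℝ (Fin n) → ℝ)
    (hmeas : ∀ t : ℝ, 0 < t → Measurable (Function.uncurry (p t)))
    (hpnn : ∀ t : ℝ, 0 < t → ∀ x y, 0 ≤ p t x y)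
    (hgauss : ∀ t : ℝ, 0 < t → ∀ x y,
      p t x y ≤ (2 * Real.pi * t) ^ (-(n : ℝ) / 2) * Real.exp (-‖x - y‖ ^ 2 / (2 * t)))
    (hck : ∀ t : ℝ, 0 < t → ∀ s : ℝ, 0 < s → ∀ x ∈ O, ∀ y ∈ O,
      p (t + s) x y = ∫ z in O, p t x z * p s z y)
    (hratio : ∀ s : ℝ, ∀ x ∈ O, ∀ y ∈ O,
      Tendsto (fun t => p (t + s) x y / p t x y) atTop (nhds 1))
    (hbd : ∀ x ∈ O, ∃ C : ℝ, 1 < C ∧ ∃ t0 : ℝ, 0 < t0 ∧ ∀ t ≥ t0, ∀ y ∈ O,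
      a t * p t x y ≤ C ^ (1 + ‖y‖))
    (tk : ℕ → ℝ) (htk : Tendsto tk atTop atTop)
    (h : EuclideanSpace ℝ (Fin n) → EuclideanSpace ℝ (Fin n) → ℝ)
    (hconv : ∀ K : Set (EuclideanSpace ℝ (Fin n) × EuclideanSpace ℝ (Fin n)),
      K ⊆ O ×ˢ O → IsCompact K →
      TendstoUniformlyOn (fun k q => a (tk k) * p (tk k) q.1 q.2)
        (fun q => h q.1 q.2) atTop K) :
    ∀ s : ℝ, 0 < s → ∀ x ∈ O, ∀ y ∈ O, h x y = ∫ z in O, h x z * p s z y := by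
  intro s hs x hx y hy
  obtain ⟨C, hC, t0, ht0, hCbd⟩ := hbd x hx
  have hlim : ∀ z ∈ O, Tendsto (fun k => a (tk k) * p (tk k) x z) atTop (𝓝 (h x z)) :=
    fun z hz => (hconv {(x, z)} (by simp [hx, hz]) isCompact_singleton).tendsto_at rfl
  have hlarge : ∀ᶠ k in atTop, t0 ≤ tk k := htk.eventually_ge_atTop t0
  have hint : Integrable (fun z => C ^ (1 + ‖z‖) * p s z y) (volume.restrict O) :=
    (integrable_rpow_one_add_norm_mul_of_le_gaussian (b := (2 * s)⁻¹)
      (G := (2 * Real.pi * s) ^ (-(n : ℝ) / 2)) (zero_lt_one.trans hC) (by positivity) y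
      (hmeas s hs).of_uncurry_right.aestronglyMeasurable (hpnn s hs · y)
      fun z => (hgauss s hs z y).trans_eq (by ring_nf)).restrict
  have hright : Tendsto (fun k => ∫ z in O, a (tk k) * p (tk k) x z * p s z y) atTop
      (𝓝 (∫ z in O, h x z * p s z y)) := by
    refine tendsto_integral_mul_of_dominated ?_ (hmeas s hs).of_uncurry_right.aestronglyMeasurable
      ?_ (ae_of_all _ (hpnn s hs · y)) hint (ae_restrict_of_forall_mem hO.measurableSet hlim)
    · filter_upwards [hlarge] with k hk
      exact ((hmeas _ (ht0.trans_le hk)).of_uncurry_left.const_mul _).aestronglyMeasurable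
    · filter_upwards [hlarge] with k hk
      refine ae_restrict_of_forall_mem hO.measurableSet fun z hz => ?_
      have htpos : 0 < tk k := ht0.trans_le hk
      rw [Real.norm_of_nonneg (mul_nonneg (hapos _ htpos).le (hpnn _ htpos x z))]
      exact hCbd _ hk z hz
  refine tendsto_nhds_unique ((tendsto_mul_of_tendsto_div_one (hlim y hy)
    ((hratio s x hx y hy).comp htk)).congr' ?_) hright
  filter_upwards [hlarge] with k hk
  simp_rw [hck _ (ht0.trans_le hk) s hs x hx y hy, ← integral_const_mul, mul_assoc]

/-- if `a(t+s)/a(t) → 1`, `p` is a symmetric kernel satisfying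
Chapman–Kolmogorov on a domain `O`, dominated by the free Gaussian kernel, with
`p(t+s,x,y)/p(t,x,y) → 1` and `a(t)p(t,x,y) ≤ C_x^{1+|y|}` for large `t`, then any
locally uniform limit point `h` of `a(t_k)p(t_k,·,·)` satisfies
`h(x,y) = ∫_O h(x,z) p(s,z,y) dz` for every `s > 0`. -/
theorem limit_point_invariance (n : ℕ) (O : Set (EuclideanSpace ℝ (Fin n))) (hO : IsOpen O)
    (a : ℝ → ℝ) (hapos : ∀ t : ℝ, 0 < t → 0 < a t)
    (halim : ∀ s : ℝ, Tendsto (fun t => a (t + s) / a t) atTop (nhds 1))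
    (p : ℝ → EuclideanSpace ℝ (Fin n) → EuclideanSpace ℝ (Fin n) → ℝ)
    (hmeas : ∀ t : ℝ, 0 < t → Measurable (Function.uncurry (p t)))
    (hpnn : ∀ t : ℝ, 0 < t → ∀ x y, 0 ≤ p t x y)
    (hsymm : ∀ t x y, p t x y = p t y x)
    (hgauss : ∀ t : ℝ, 0 < t → ∀ x y,
      p t x y ≤ (2 * Real.pi * t) ^ (-(n : ℝ) / 2) * Real.exp (-‖x - y‖ ^ 2 / (2 * t)))
    (hck : ∀ t : ℝ, 0 < t → ∀ s : ℝ, 0 < s → ∀ x ∈ O, ∀ y ∈ O,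
      p (t + s) x y = ∫ z in O, p t x z * p s z y)
    (hratio : ∀ s : ℝ, ∀ x ∈ O, ∀ y ∈ O,
      Tendsto (fun t => p (t + s) x y / p t x y) atTop (nhds 1))
    (hbd : ∀ x ∈ O, ∃ C : ℝ, 1 < C ∧ ∃ t0 : ℝ, 0 < t0 ∧ ∀ t ≥ t0, ∀ y ∈ O,
      a t * p t x y ≤ C ^ (1 + ‖y‖))
    (tk : ℕ → ℝ) (htk : Tendsto tk atTop atTop)
    (h : EuclideanSpace ℝ (Fin n) → EuclideanSpace ℝ (Fin n) → ℝ)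
    (hconv : ∀ K : Set (EuclideanSpace ℝ (Fin n) × EuclideanSpace ℝ (Fin n)),
      K ⊆ O ×ˢ O → IsCompact K →
      TendstoUniformlyOn (fun k q => a (tk k) * p (tk k) q.1 q.2)
        (fun q => h q.1 q.2) atTop K) :
    ∀ s : ℝ, 0 < s → ∀ x ∈ O, ∀ y ∈ O, h x y = ∫ z in O, h x z * p s z y :=
  limit_point_invariance_general n O hO a hapos p hmeas hpnn hgauss hck hratio hbd tk htk h hconv
end
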